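/- arXiv:1912.12588 — 9 statements merged into one kernel-verified Lean document; each statement's English description precedes it below -/
import Mathlib

section
/- Let n be a natural number, let q, p : Fin n → ℂ with p injective (the p_i are pairwise distinct), and let g ∈ ℂ. Define the n×n complex matrix Q by Q i i = q i and Q i j = i·g/(p i − p j) for i ≠ j, where i is the imaginary unit. Then trace(Q³) = Σ_i (q i)³ + 3 g² Σ_{i<j} (q i + q j)/(p i − p j)². -/
/-!
Split `Q = D + A` with `D = diagonal q` and `A` skew-symmetric with zero diagonal. Cyclicity of the
trace gives `tr Q³ = tr D³ + 3 tr (D²A) + 3 tr (DA²) + tr A³`. The last term vanishes since `A` is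
skew, the second since `A` has zero diagonal, and `tr (DA²) = ∑ᵢⱼ qᵢ Aᵢⱼ Aⱼᵢ` with
`Aᵢⱼ Aⱼᵢ = g² / (pᵢ - pⱼ)²` because `I² = -1`; symmetrizing this double sum over pairs `i < j`
gives the claim.
-/
open Matrix Finset

namespace Matrix

variable {ι R : Type*} [Fintype ι] [DecidableEq ι]

theorem trace_pow_eq_zero_of_transpose_eq_neg [CommRing R] [IsAddTorsionFree R]
    {A : Matrix ι ι R} (hA : Aᵀ = -A) {k : ℕ} (hk : Odd k) : trace (A ^ k) = 0 := by
  refine self_eq_neg.mp ?_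
  calc trace (A ^ k) = trace ((A ^ k)ᵀ) := (trace_transpose _).symm
    _ = -trace (A ^ k) := by rw [transpose_pow, hA, hk.neg_pow, trace_neg]

theorem trace_add_pow_three [CommRing R] (D A : Matrix ι ι R) :
    trace ((D + A) ^ 3) =
      trace (D ^ 3) + 3 * trace (D ^ 2 * A) + 3 * trace (D * A ^ 2) + trace (A ^ 3) := by
  have expand : (D + A) ^ 3 = D ^ 3 + (D ^ 2 * A + D * A * D + A * D ^ 2)
      + (D * A ^ 2 + A * D * A + A ^ 2 * D) + A ^ 3 := by
    noncomm_ring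
  have h1 : trace (D * A * D) = trace (D ^ 2 * A) := by
    rw [trace_mul_cycle, sq]
  have h2 : trace (A * D ^ 2) = trace (D ^ 2 * A) := trace_mul_comm _ _
  have h3 : trace (A * D * A) = trace (D * A ^ 2) := by
    rw [trace_mul_comm, ← Matrix.mul_assoc, trace_mul_comm, sq]
  have h4 : trace (A ^ 2 * D) = trace (D * A ^ 2) := trace_mul_comm _ _
  simp only [expand, trace_add, h1, h2, h3, h4]
  ring

theorem trace_diagonal_mul [NonUnitalNonAssocSemiring R] (d : ι → R) (A : Matrix ι ι R) :
    trace (diagonal d * A) = ∑ i, d i * A i i := by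
  simp [trace, diagonal_mul]

end Matrix

theorem Fintype.sum_sum_eq_sum_sum_lt_add_swap {ι M : Type*} [Fintype ι] [LinearOrder ι]
    [AddCommMonoid M] (f : ι → ι → M) (hf : ∀ i, f i i = 0) :
    ∑ i, ∑ j, f i j = ∑ i, ∑ j, if i < j then f i j + f j i else 0 := by
  have split : ∀ i j, f i j = (if i < j then f i j else 0) + (if j < i then f i j else 0) := by
    intro i j
    rcases lt_trichotomy i j with h | rfl | h
    · simp [h, h.not_gt]
    · simp [hf]
    · simp [h, h.not_gt]
  calc ∑ i, ∑ j, f i j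
      = ∑ i, ∑ j, (if i < j then f i j else 0) + ∑ i, ∑ j, (if j < i then f i j else 0) := by
        rw [← sum_add_distrib]
        refine Finset.sum_congr rfl fun i _ => ?_
        rw [← sum_add_distrib]
        exact Finset.sum_congr rfl fun j _ => split i j
    _ = ∑ i, ∑ j, (if i < j then f i j else 0) + ∑ i, ∑ j, (if i < j then f j i else 0) := by
        rw [sum_comm (f := fun i j => if j < i then f i j else 0)]
    _ = ∑ i, ∑ j, if i < j then f i j + f j i else 0 := by
        rw [← sum_add_distrib]
        refine Finset.sum_congr rfl fun i _ => ?_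
        rw [← sum_add_distrib]
        exact Finset.sum_congr rfl fun j _ => by split_ifs <;> simp

-- The diagonal terms vanish as `x / 0 = 0`.
theorem sum_sum_div_sub_sq {ι K : Type*} [Fintype ι] [LinearOrder ι] [Field K] (q p : ι → K) :
    ∑ i, ∑ j, q i / (p i - p j) ^ 2 =
      ∑ i, ∑ j, if i < j then (q i + q j) / (p i - p j) ^ 2 else 0 := by
  rw [Fintype.sum_sum_eq_sum_sum_lt_add_swap _ fun i => by simp]
  simp only [add_div, sub_sq_comm (p _) (p _)]

section CauchyOffDiag

variable {ι K : Type*} [DecidableEq ι] [Field K]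

def cauchyOffDiag (c : K) (p : ι → K) : Matrix ι ι K :=
  of fun i j => if i = j then 0 else c / (p i - p j)

theorem cauchyOffDiag_apply_self (c : K) (p : ι → K) (i : ι) : cauchyOffDiag c p i i = 0 := by
  simp [cauchyOffDiag]

theorem transpose_cauchyOffDiag (c : K) (p : ι → K) :
    (cauchyOffDiag c p)ᵀ = -cauchyOffDiag c p := by
  ext i j
  by_cases h : i = j
  · simp [cauchyOffDiag, h]
  · rw [transpose_apply, neg_apply]
    simp only [cauchyOffDiag, of_apply, if_neg h, if_neg (Ne.symm h)]
    rw [← neg_sub, div_neg]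

-- For `i = j` both sides are `0`, through `x / 0 = 0` on the right.
theorem cauchyOffDiag_mul_cauchyOffDiag_swap (c : K) (p : ι → K) (i j : ι) :
    cauchyOffDiag c p i j * cauchyOffDiag c p j i = -c ^ 2 / (p i - p j) ^ 2 := by
  by_cases h : i = j
  · simp [cauchyOffDiag, h]
  · simp only [cauchyOffDiag, of_apply, if_neg h, if_neg (Ne.symm h)]
    rw [← neg_sub (p i), div_neg, mul_neg, ← sq, div_pow, neg_div]

end CauchyOffDiag

theorem trace_Q_cubed_general (n : ℕ) (q p : Fin n → ℂ) (g : ℂ) :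
    Matrix.trace
        ((Matrix.of fun i j : Fin n =>
          if i = j then q i else Complex.I * g / (p i - p j)) ^ 3)
      = (∑ i, (q i) ^ 3)
        + 3 * g ^ 2 * ∑ i, ∑ j, if i < j then (q i + q j) / (p i - p j) ^ 2 else 0 := by
  set A := cauchyOffDiag (Complex.I * g) p
  have hQ : (Matrix.of fun i j : Fin n =>
      if i = j then q i else Complex.I * g / (p i - p j)) = diagonal q + A := by
    ext i j
    by_cases h : i = j <;> simp [A, cauchyOffDiag, h]
  have hDDD : trace (diagonal q ^ 3) = ∑ i, q i ^ 3 := by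
    rw [diagonal_pow, trace_diagonal]; rfl
  have hDDA : trace (diagonal q ^ 2 * A) = 0 := by
    simp [diagonal_pow, trace_diagonal_mul, A, cauchyOffDiag_apply_self]
  have hDAA : trace (diagonal q * A ^ 2) = g ^ 2 * ∑ i, ∑ j, q i / (p i - p j) ^ 2 := by
    simp only [trace_diagonal_mul, sq A, mul_apply, A, cauchyOffDiag_mul_cauchyOffDiag_swap,
      mul_sum, mul_pow, Complex.I_sq]
    exact sum_congr rfl fun i _ => sum_congr rfl fun j _ => by ring
  rw [hQ, trace_add_pow_three, hDDD, hDDA, hDAA,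
    trace_pow_eq_zero_of_transpose_eq_neg (transpose_cauchyOffDiag _ _) (by decide),
    sum_sum_div_sub_sq]
  ring

/-- Appendix computation of `Tr Q³` for the dual-coordinate matrix `Q` with diagonal
entries `q i` and off-diagonal entries `I·g/(p i − p j)`. -/
theorem trace_Q_cubed (n : ℕ) (q p : Fin n → ℂ) (hp : Function.Injective p) (g : ℂ) :
    Matrix.trace
        ((Matrix.of fun i j : Fin n =>
          if i = j then q i else Complex.I * g / (p i - p j)) ^ 3)
      = (∑ i, (q i) ^ 3)
        + 3 * g ^ 2 * ∑ i, ∑ j, if i < j then (q i + q j) / (p i - p j) ^ 2 else 0 :=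
  trace_Q_cubed_general n q p g
end

section
/- Let n be a natural number, let q, p : Fin n → ℂ with q injective, and let g ∈ ℂ. Define the n×n complex matrix P by P i i = p i and P i j = i·g/(q i − q j) for i ≠ j, where i is the imaginary unit. Then trace(P²/2) = Σ_i (p i)²/2 + Σ_{i<j} g²/(q i − q j)². -/
/-!
`Tr(P²) = ∑ᵢ ∑ⱼ Pᵢⱼ Pⱼᵢ`, and the summand is symmetric in `i, j`. On the diagonal it is `pᵢ²`;
off the diagonal the factor `I² = -1` cancels the sign of `(qᵢ - qⱼ)(qⱼ - qᵢ) = -(qᵢ - qⱼ)²`,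
so it is `g² / (qᵢ - qⱼ)²`, and each unordered pair `i < j` is counted twice.
-/

theorem Matrix.trace_mul_self_eq_sum {ι R : Type*} [Fintype ι] [NonUnitalNonAssocSemiring R]
    (A : Matrix ι ι R) : (A * A).trace = ∑ i, ∑ j, A i j * A j i := by
  simp only [Matrix.trace, Matrix.diag, Matrix.mul_apply]

theorem Finset.sum_sum_eq_sum_diag_add_two_mul_sum_lt {ι R : Type*} [Fintype ι] [LinearOrder ι]
    [NonAssocSemiring R] (f : ι → ι → R) (hf : ∀ i j, f i j = f j i) :
    ∑ i, ∑ j, f i j = ∑ i, f i i + 2 * ∑ i, ∑ j, if i < j then f i j else 0 := by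
  have hsplit : ∀ i j, f i j =
      (if i = j then f i j else 0) + (if i < j then f i j else 0) + (if j < i then f i j else 0) := by
    intro i j
    rcases lt_trichotomy i j with h | rfl | h
    · simp [h, h.ne, h.not_gt]
    · simp
    · simp [h, h.ne', h.not_gt]
  have hswap : (∑ i, ∑ j, if j < i then f i j else 0) = ∑ i, ∑ j, if i < j then f i j else 0 := by
    rw [Finset.sum_comm]
    simp_rw [hf]
  calc ∑ i, ∑ j, f i j
      = ∑ i, ∑ j, ((if i = j then f i j else 0) + (if i < j then f i j else 0)
          + (if j < i then f i j else 0)) :=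
        Finset.sum_congr rfl fun i _ => Finset.sum_congr rfl fun j _ => hsplit i j
    _ = ∑ i, f i i + 2 * ∑ i, ∑ j, if i < j then f i j else 0 := by
        simp only [Finset.sum_add_distrib, Finset.sum_ite_eq, Finset.mem_univ, if_true, hswap]
        rw [add_assoc, two_mul]

section CalogeroLax

variable {ι : Type*} [DecidableEq ι]

noncomputable def calogeroLax (q p : ι → ℂ) (g : ℂ) : Matrix ι ι ℂ :=
  Matrix.of fun i j => if i = j then p i else Complex.I * g / (q i - q j)

theorem calogeroLax_apply_self (q p : ι → ℂ) (g : ℂ) (i : ι) : calogeroLax q p g i i = p i := by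
  simp [calogeroLax]

theorem calogeroLax_mul_calogeroLax_of_ne (q p : ι → ℂ) (g : ℂ) {i j : ι} (h : i ≠ j) :
    calogeroLax q p g i j * calogeroLax q p g j i = g ^ 2 / (q i - q j) ^ 2 := by
  have hsub : q j - q i = -(q i - q j) := by ring
  simp only [calogeroLax, Matrix.of_apply, if_neg h, if_neg (Ne.symm h), hsub]
  rw [div_mul_div_comm, mul_mul_mul_comm, Complex.I_mul_I, mul_neg, neg_one_mul, neg_div_neg_eq,
    sq, sq]

end CalogeroLax

theorem trace_calogero_lax_squared_general (n : ℕ) (q p : Fin n → ℂ) (g : ℂ) :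
    Matrix.trace ((1 / 2 : ℂ) •
        (Matrix.of fun i j : Fin n =>
          if i = j then p i else Complex.I * g / (q i - q j)) ^ 2)
      = (∑ i, (p i) ^ 2 / 2)
        + ∑ i, ∑ j, if i < j then g ^ 2 / (q i - q j) ^ 2 else 0 := by
  change ((1 / 2 : ℂ) • calogeroLax q p g ^ 2).trace = _
  have hoff : ∀ i j : Fin n,
      (if i < j then calogeroLax q p g i j * calogeroLax q p g j i else 0)
        = if i < j then g ^ 2 / (q i - q j) ^ 2 else 0 := fun i j => by
    split_ifs with h
    exacts [calogeroLax_mul_calogeroLax_of_ne q p g h.ne, rfl]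
  rw [Matrix.trace_smul, sq, Matrix.trace_mul_self_eq_sum,
    Finset.sum_sum_eq_sum_diag_add_two_mul_sum_lt _ fun i j => mul_comm _ _]
  simp only [hoff, calogeroLax_apply_self, smul_eq_mul, ← Finset.sum_div, sq]
  ring

/-- Reduced free Hamiltonian `Tr(P²/2)` for the rational Calogero-Moser Lax matrix `P`
with diagonal entries `p i` and off-diagonal entries `I·g/(q i − q j)`:
it equals the rational Calogero Hamiltonian. -/
theorem trace_calogero_lax_squared (n : ℕ) (q p : Fin n → ℂ)
    (hq : Function.Injective q) (g : ℂ) :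
    Matrix.trace ((1 / 2 : ℂ) •
        (Matrix.of fun i j : Fin n =>
          if i = j then p i else Complex.I * g / (q i - q j)) ^ 2)
      = (∑ i, (p i) ^ 2 / 2)
        + ∑ i, ∑ j, if i < j then g ^ 2 / (q i - q j) ^ 2 else 0 :=
  trace_calogero_lax_squared_general n q p g
end

section
/- Let n be a natural number, let ω be a nonzero real (or complex) number, g a constant, and for vectors x, y : Fin n → ℂ with pairwise distinct denominators define H_red(x, y) = Σ_i ((y i)²/2 + ω²(x i)²/2) + g² Σ_{i<j} 1/(x i − x j)² (requiring x injective) and H_dual(x, y) = Σ_i ((y i)²/2 + ω²(x i)²/2) + ω² g² Σ_{i<j} 1/(y i − y j)² (requiring y injective). Then for any q, p : Fin n → ℂ with p injective, H_dual(q, p) = H_red(−p/ω, ω·q), i.e., the map q_i ↦ −p_i/ω, p_i ↦ ω·q_i transforms the reduced harmonic oscillator Hamiltonian into the dual one. -/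
/-!
The map `(q, p) ↦ (-p/ω, ω q)` exchanges the two quadratic terms of the harmonic energy
`p²/2 + ω² q²/2`, and rescales every difference of coordinates by `-1/ω`, so each
inverse-square interaction term picks up exactly the factor `ω²` of the dual coupling.
-/

/-- Reduced Hamiltonian of the matrix harmonic oscillator: rational Calogero in a harmonic
well, with inverse-square interaction in the coordinates. -/
noncomputable def Hred (n : ℕ) (ω g : ℂ) (x y : Fin n → ℂ) : ℂ :=
  (∑ i, ((y i) ^ 2 / 2 + ω ^ 2 * (x i) ^ 2 / 2))
    + g ^ 2 * ∑ i, ∑ j, if i < j then 1 / (x i - x j) ^ 2 else 0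

/-- Dual Hamiltonian of the matrix harmonic oscillator: interaction in the momenta with
coupling `ω²g²`. -/
noncomputable def Hdual (n : ℕ) (ω g : ℂ) (x y : Fin n → ℂ) : ℂ :=
  (∑ i, ((y i) ^ 2 / 2 + ω ^ 2 * (x i) ^ 2 / 2))
    + ω ^ 2 * g ^ 2 * ∑ i, ∑ j, if i < j then 1 / (y i - y j) ^ 2 else 0

lemma one_div_sq_neg_div_sub_neg_div {K : Type*} [Field K] (a b c : K) :
    1 / (-a / c - -b / c) ^ 2 = c ^ 2 * (1 / (a - b) ^ 2) := by
  rw [show -a / c - -b / c = -(a - b) / c by ring, neg_div, neg_sq, div_pow, one_div_div,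
    mul_one_div]

lemma sum_inv_sq_sub_neg_div {K ι : Type*} [Field K] [Fintype ι] [LT ι]
    [DecidableRel ((· < ·) : ι → ι → Prop)] (x : ι → K) (c : K) :
    (∑ i, ∑ j, if i < j then 1 / (-x i / c - -x j / c) ^ 2 else 0)
      = c ^ 2 * ∑ i, ∑ j, if i < j then 1 / (x i - x j) ^ 2 else 0 := by
  simp only [one_div_sq_neg_div_sub_neg_div, Finset.mul_sum, mul_ite, mul_zero]

lemma harmonic_energy_swap {K ι : Type*} [Field K] [Fintype ι] {ω : K} (hω : ω ≠ 0)
    (q p : ι → K) :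
    ∑ i, ((ω * q i) ^ 2 / 2 + ω ^ 2 * (-p i / ω) ^ 2 / 2)
      = ∑ i, (p i ^ 2 / 2 + ω ^ 2 * q i ^ 2 / 2) := by
  refine Finset.sum_congr rfl fun i _ => ?_
  field_simp
  ring

theorem harmonic_oscillator_self_dual_general (n : ℕ) (ω g : ℂ) (hω : ω ≠ 0)
    (q p : Fin n → ℂ) :
    Hdual n ω g q p = Hred n ω g (fun i => -(p i) / ω) (fun i => ω * q i) := by
  rw [Hdual, Hred, harmonic_energy_swap hω, sum_inv_sq_sub_neg_div]
  ring

/-- Self-duality of the reduced matrix harmonic oscillator: the map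
`q_i ↦ −p_i/ω, p_i ↦ ω·q_i` transforms the reduced Hamiltonian into the dual one. -/
theorem harmonic_oscillator_self_dual (n : ℕ) (ω g : ℂ) (hω : ω ≠ 0)
    (q p : Fin n → ℂ) (hp : Function.Injective p) :
    Hdual n ω g q p = Hred n ω g (fun i => -(p i) / ω) (fun i => ω * q i) :=
  harmonic_oscillator_self_dual_general n ω g hω q p
end

section
/- Let n be a natural number, θ ∈ ℂ, and let q, p : ℝ → Matrix (Fin n) (Fin n) ℂ be differentiable functions satisfying, for all t, q'(t) = p(t) and p'(t) = 2·(q t)³ + t·(q t) + θ·1. Then the matrix commutator [p(t), q(t)] = p(t)·q(t) − q(t)·p(t) is constant in t (its derivative is the zero matrix for every t). -/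
open Matrix

section EntrywiseDerivative

variable {𝕜 𝔸 : Type*} [NontriviallyNormedField 𝕜] [NormedCommRing 𝔸] [NormedAlgebra 𝕜 𝔸]
  {l m n : Type*} [Fintype m] {t : 𝕜}

theorem Matrix.hasDerivAt_mul_apply {f : 𝕜 → Matrix l m 𝔸} {g : 𝕜 → Matrix m n 𝔸}
    {f' : Matrix l m 𝔸} {g' : Matrix m n 𝔸}
    (hf : ∀ i j, HasDerivAt (fun s => f s i j) (f' i j) t)
    (hg : ∀ i j, HasDerivAt (fun s => g s i j) (g' i j) t) (i : l) (j : n) :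
    HasDerivAt (fun s => (f s * g s) i j) ((f' * g t + f t * g') i j) t := by
  simp only [mul_apply, add_apply, ← Finset.sum_add_distrib]
  exact HasDerivAt.fun_sum fun k _ => (hf i k).mul (hg k j)

theorem Matrix.hasDerivAt_commutator_apply {p q : 𝕜 → Matrix m m 𝔸} {p' q' : Matrix m m 𝔸}
    (hp : ∀ i j, HasDerivAt (fun s => p s i j) (p' i j) t)
    (hq : ∀ i j, HasDerivAt (fun s => q s i j) (q' i j) t) (i j : m) :
    HasDerivAt (fun s => (p s * q s - q s * p s) i j)
      ((p' * q t + p t * q' - (q' * p t + q t * p')) i j) t := by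
  simpa only [sub_apply] using
    (hasDerivAt_mul_apply hp hq i j).fun_sub (hasDerivAt_mul_apply hq hp i j)

/-- Along `q' = p`, `p' = F` one has `[p, q]' = [F, q] + [p, p]`, and both terms vanish. -/
theorem Matrix.hasDerivAt_commutator_apply_eq_zero {p q : 𝕜 → Matrix m m 𝔸}
    {F : Matrix m m 𝔸} (hq : ∀ i j, HasDerivAt (fun s => q s i j) (p t i j) t)
    (hp : ∀ i j, HasDerivAt (fun s => p s i j) (F i j) t) (hF : Commute F (q t)) (i j : m) :
    HasDerivAt (fun s => (p s * q s - q s * p s) i j) 0 t := by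
  have hzero : F * q t + p t * p t - (p t * p t + q t * F) = 0 := by
    rw [hF.eq]; abel
  simpa only [hzero, zero_apply] using hasDerivAt_commutator_apply hp hq i j

end EntrywiseDerivative

/-- Along the matrix Painlevé II flow `q' = p`, `p' = 2q³ + tq + θ·1`, the commutator
`[p, q] = pq − qp` (the moment map of the adjoint `GL(n)`-action) is conserved:
its entrywise time derivative vanishes. -/
theorem matrix_painleveII_moment_map_conserved (n : ℕ) (θ : ℂ)
    (q p : ℝ → Matrix (Fin n) (Fin n) ℂ)
    (hq : ∀ (t : ℝ) (i j : Fin n), HasDerivAt (fun s => q s i j) (p t i j) t)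
    (hp : ∀ (t : ℝ) (i j : Fin n),
      HasDerivAt (fun s => p s i j)
        (((2 : ℂ) • (q t) ^ 3 + (t : ℂ) • q t
          + θ • (1 : Matrix (Fin n) (Fin n) ℂ)) i j) t) :
    ∀ (t : ℝ) (i j : Fin n),
      HasDerivAt (fun s => (p s * q s - q s * p s) i j) 0 t := by
  intro t
  have hcomm : Commute ((2 : ℂ) • q t ^ 3 + (t : ℂ) • q t + θ • 1) (q t) :=
    ((((Commute.refl _).pow_left 3).smul_left _).add_left ((Commute.refl _).smul_left _)).add_left
      ((Commute.one_left _).smul_left _)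
  exact hasDerivAt_commutator_apply_eq_zero (hq t) (hp t) hcomm
end

section
/- Let n be a natural number, θ₀, θ₁ ∈ ℂ, and let q, p : ℝ → Matrix (Fin n) (Fin n) ℂ be differentiable functions satisfying, for all t, q'(t) = p(t)·q(t) + q(t)·p(t) − (q t)² − t·q(t) + θ₀·1 and p'(t) = p(t)·q(t) + q(t)·p(t) − (p t)² + t·p(t) + (θ₀+θ₁)·1. Then the matrix commutator [p(t), q(t)] = p(t)·q(t) − q(t)·p(t) is constant in t (its derivative is the zero matrix for every t). -/
/-!
Differentiating, `d/dt [p, q] = [ṗ, q] + [p, q̇]`. The scalar terms are central, the `±t` terms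
contribute `t [p, q] - t [p, q]`, and the quadratic terms cancel identically in any ring:
`[pq + qp - p², q] + [p, pq + qp - q²] = 0`.
-/

open Matrix

theorem Matrix.hasDerivAt_mul_apply_s10 {𝕜 𝔸 : Type*} [NontriviallyNormedField 𝕜]
    [NormedRing 𝔸] [NormedAlgebra 𝕜 𝔸] {l m n : Type*} [Fintype m]
    {a : 𝕜 → Matrix l m 𝔸} {b : 𝕜 → Matrix m n 𝔸}
    {A : Matrix l m 𝔸} {B : Matrix m n 𝔸}
    {t : 𝕜} (ha : ∀ i j, HasDerivAt (fun s => a s i j) (A i j) t)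
    (hb : ∀ i j, HasDerivAt (fun s => b s i j) (B i j) t) (i : l) (k : n) :
    HasDerivAt (fun s => (a s * b s) i k) ((A * b t + a t * B) i k) t := by
  simpa only [mul_apply, add_apply, Finset.sum_add_distrib] using
    HasDerivAt.fun_sum fun j _ => (ha i j).fun_mul (hb j k)

theorem Matrix.hasDerivAt_lie_apply {𝕜 𝔸 : Type*} [NontriviallyNormedField 𝕜]
    [NormedRing 𝔸] [NormedAlgebra 𝕜 𝔸] {n : Type*} [Fintype n]
    {a b : 𝕜 → Matrix n n 𝔸} {A B : Matrix n n 𝔸}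
    {t : 𝕜} (ha : ∀ i j, HasDerivAt (fun s => a s i j) (A i j) t)
    (hb : ∀ i j, HasDerivAt (fun s => b s i j) (B i j) t) (i j : n) :
    HasDerivAt (fun s => ⁅a s, b s⁆ i j) ((⁅A, b t⁆ + ⁅a t, B⁆) i j) t := by
  have h := (hasDerivAt_mul_apply_s10 ha hb i j).fun_sub (hasDerivAt_mul_apply_s10 hb ha i j)
  have hderiv : (⁅A, b t⁆ + ⁅a t, B⁆) i j =
      (A * b t + a t * B) i j - (B * a t + b t * A) i j := by
    simp only [Ring.lie_def, add_apply, sub_apply]; abel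
  rw [hderiv]
  simpa only [Ring.lie_def, sub_apply] using h

theorem lie_painleveIV_add_lie_painleveIV_eq_zero {K R : Type*} [CommRing K] [Ring R]
    [Algebra K R] (p q : R) (t a b : K) :
    ⁅p * q + q * p - p ^ 2 + t • p + b • 1, q⁆ +
      ⁅p, p * q + q * p - q ^ 2 - t • q + a • 1⁆ = 0 := by
  simp only [Ring.lie_def, add_mul, mul_add, sub_mul, mul_sub, smul_mul_assoc,
    mul_smul_comm, one_mul, mul_one, pow_two, mul_assoc]
  abel

/-- Along the matrix Painlevé IV flow
`q' = pq + qp − q² − tq + θ₀·1`, `p' = pq + qp − p² + tp + (θ₀+θ₁)·1`,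
the commutator `[p, q] = pq − qp` (the moment map of the adjoint `GL(n)`-action)
is conserved: its entrywise time derivative vanishes. -/
theorem matrix_painleveIV_moment_map_conserved (n : ℕ) (θ₀ θ₁ : ℂ)
    (q p : ℝ → Matrix (Fin n) (Fin n) ℂ)
    (hq : ∀ (t : ℝ) (i j : Fin n),
      HasDerivAt (fun s => q s i j)
        ((p t * q t + q t * p t - (q t) ^ 2 - (t : ℂ) • q t
          + θ₀ • (1 : Matrix (Fin n) (Fin n) ℂ)) i j) t)
    (hp : ∀ (t : ℝ) (i j : Fin n),
      HasDerivAt (fun s => p s i j)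
        ((p t * q t + q t * p t - (p t) ^ 2 + (t : ℂ) • p t
          + (θ₀ + θ₁) • (1 : Matrix (Fin n) (Fin n) ℂ)) i j) t) :
    ∀ (t : ℝ) (i j : Fin n),
      HasDerivAt (fun s => (p s * q s - q s * p s) i j) 0 t := by
  intro t i j
  have h := hasDerivAt_lie_apply (hp t) (hq t) i j
  rw [lie_painleveIV_add_lie_painleveIV_eq_zero] at h
  simpa only [Ring.lie_def, Matrix.zero_apply] using h
end

section
/- Let n be a natural number, t, θ₀, θ₁ ∈ ℂ, and for n×n complex matrices q, p define H(q, p; θ₀, θ₁) = trace(p·q·(p − q − t·1) + θ₀·p − (θ₀+θ₁)·q). Then H(−p, −q; θ₀+θ₁, −θ₁) = H(q, p; θ₀, θ₁); that is, the matrix Painlevé IV Hamiltonian is invariant under the involution q ↦ −p, p ↦ −q accompanied by the parameter change θ₀ ↦ θ₀+θ₁, θ₁ ↦ −θ₁. -/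
/-- The matrix Painlevé IV Hamiltonian `H(q,p;θ₀,θ₁) = Tr(pq(p − q − t·1) + θ₀p − (θ₀+θ₁)q)`. -/
noncomputable def HmatIV (n : ℕ) (t θ₀ θ₁ : ℂ) (q p : Matrix (Fin n) (Fin n) ℂ) : ℂ :=
  Matrix.trace (p * q * (p - q - t • (1 : Matrix (Fin n) (Fin n) ℂ)) + θ₀ • p - (θ₀ + θ₁) • q)

open Matrix

/- In this form the cubic part is antisymmetric under `p ↔ q`, which compensates the sign it
picks up from `q ↦ −p, p ↦ −q`. -/
theorem HmatIV_eq_trace_monomials (n : ℕ) (t θ₀ θ₁ : ℂ) (q p : Matrix (Fin n) (Fin n) ℂ) :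
    HmatIV n t θ₀ θ₁ q p =
      trace (p * p * q) - trace (q * q * p) - t * trace (p * q) + θ₀ * trace p
        - (θ₀ + θ₁) * trace q := by
  simp only [HmatIV, mul_sub, trace_sub, trace_add, trace_smul, Matrix.mul_smul, mul_one,
    smul_eq_mul]
  rw [trace_mul_cycle p q p, ← trace_mul_cycle q q p]

/-- The matrix Painlevé IV Hamiltonian is invariant under the involution
`q ↦ −p, p ↦ −q` with the parameter change `θ₀ ↦ θ₀+θ₁, θ₁ ↦ −θ₁`. -/
theorem matrix_painleveIV_involution_invariant (n : ℕ) (t θ₀ θ₁ : ℂ)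
    (q p : Matrix (Fin n) (Fin n) ℂ) :
    HmatIV n t (θ₀ + θ₁) (-θ₁) (-p) (-q) = HmatIV n t θ₀ θ₁ q p := by
  simp only [HmatIV_eq_trace_monomials, neg_mul, mul_neg, neg_neg, trace_neg, trace_mul_comm q p]
  ring
end

section
/- Let n be a natural number, t, θ₀, θ₁, g ∈ ℂ, and for x, y : Fin n → ℂ define D(x,y) = Σ_i [x_i y_i² − y_i x_i² − t x_i y_i + θ₀ y_i − (θ₀+θ₁) x_i]. Define H_red(x, y; θ₀, θ₁) = D(x,y) + g² Σ_{i<j} (x_i + x_j)/(x_i − x_j)² (for x injective) and H_dual(x, y; θ₀, θ₁) = D(x,y) − g² Σ_{i<j} (y_i + y_j)/(y_i − y_j)² (for y injective). Then for any q, p : Fin n → ℂ with q injective, H_dual(−p, −q; θ₀+θ₁, −θ₁) = H_red(q, p; θ₀, θ₁). -/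
/-- The common uncoupled part of the Calogero–Painlevé IV Hamiltonians:
`D(x,y) = Σᵢ [xᵢyᵢ² − yᵢxᵢ² − t xᵢ yᵢ + θ₀ yᵢ − (θ₀+θ₁) xᵢ]`. -/
noncomputable def DpartIV (n : ℕ) (t θ₀ θ₁ : ℂ) (x y : Fin n → ℂ) : ℂ :=
  ∑ i, (x i * (y i) ^ 2 - y i * (x i) ^ 2 - t * x i * y i + θ₀ * y i - (θ₀ + θ₁) * x i)

/-- The reduced Calogero–Painlevé IV Hamiltonian (interaction in the coordinates). -/
noncomputable def HredIV (n : ℕ) (t θ₀ θ₁ g : ℂ) (x y : Fin n → ℂ) : ℂ :=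
  DpartIV n t θ₀ θ₁ x y
    + g ^ 2 * ∑ i, ∑ j, if i < j then (x i + x j) / (x i - x j) ^ 2 else 0

/-- The dual Calogero–Painlevé IV Hamiltonian (interaction in the momenta). -/
noncomputable def HdualIV (n : ℕ) (t θ₀ θ₁ g : ℂ) (x y : Fin n → ℂ) : ℂ :=
  DpartIV n t θ₀ θ₁ x y
    - g ^ 2 * ∑ i, ∑ j, if i < j then (y i + y j) / (y i - y j) ^ 2 else 0

theorem DpartIV_neg_swap (n : ℕ) (t θ₀ θ₁ : ℂ) (x y : Fin n → ℂ) :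
    DpartIV n t (θ₀ + θ₁) (-θ₁) (fun i => -y i) (fun i => -x i) = DpartIV n t θ₀ θ₁ x y :=
  Finset.sum_congr rfl fun _ _ => by ring

theorem sum_pairs_neg_div_sub_sq {K ι : Type*} [Field K] [Fintype ι] [LT ι]
    [DecidableRel (α := ι) (· < ·)] (x : ι → K) :
    (∑ i, ∑ j, if i < j then (-x i + -x j) / (-x i - -x j) ^ 2 else 0)
      = -∑ i, ∑ j, if i < j then (x i + x j) / (x i - x j) ^ 2 else 0 := by
  simp only [← Finset.sum_neg_distrib]
  refine Finset.sum_congr rfl fun i _ => Finset.sum_congr rfl fun j _ => ?_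
  split_ifs
  · rw [neg_sub_neg, ← neg_sub, neg_sq, ← neg_add, neg_div]
  · exact neg_zero.symm

theorem calogero_painleveIV_self_dual_general (n : ℕ) (t θ₀ θ₁ g : ℂ)
    (q p : Fin n → ℂ) :
    HdualIV n t (θ₀ + θ₁) (-θ₁) g (fun i => -p i) (fun i => -q i)
      = HredIV n t θ₀ θ₁ g q p := by
  rw [HdualIV, HredIV, DpartIV_neg_swap, sum_pairs_neg_div_sub_sq, mul_neg, sub_neg_eq_add]

/-- Self-duality of Calogero–Painlevé IV (Proposition 3.1): the anti-symplectic involution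
`qᵢ ↦ −pᵢ, pᵢ ↦ −qᵢ` with parameter change `θ₀ ↦ θ₀+θ₁, θ₁ ↦ −θ₁` maps the dual
Hamiltonian to the reduced one. -/
theorem calogero_painleveIV_self_dual (n : ℕ) (t θ₀ θ₁ g : ℂ)
    (q p : Fin n → ℂ) (hq : Function.Injective q) :
    HdualIV n t (θ₀ + θ₁) (-θ₁) g (fun i => -p i) (fun i => -q i)
      = HredIV n t θ₀ θ₁ g q p :=
  calogero_painleveIV_self_dual_general n t θ₀ θ₁ g q p
end

section
/- Let n be a natural number, t, θ, g ∈ ℂ, let q, p : Fin n → ℂ with q injective, let Q = diag(q_1,…,q_n), and let P be the n×n complex matrix with P i i = p i and P i j = i·g/(q i − q j) for i ≠ j (i the imaginary unit). Then trace(P²/2 − (Q² + (t/2)·1)²/2 − θ·Q) = Σ_i [p_i²/2 − (q_i² + t/2)²/2 − θ q_i] + g² Σ_{i<j} 1/(q_i − q_j)². -/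
/-! Tracing `P²` pairs the entry `P i j = I g / (q i - q j)` with `P j i = I g / (q j - q i)`,
and their product is `-(I g)² / (q i - q j)² = g² / (q i - q j)²`; each unordered pair `{i, j}`
appears twice, which cancels the factor `1/2`. All other terms of the Hamiltonian are diagonal. -/

open Finset Matrix

theorem Finset.sum_sum_eq_sum_diag_add_two_nsmul_of_symm {ι R : Type*} [Fintype ι] [LinearOrder ι]
    [AddCommMonoid R] (f : ι → ι → R) (hf : ∀ i j, f i j = f j i) :
    ∑ i, ∑ j, f i j = ∑ i, f i i + 2 • ∑ i, ∑ j, if i < j then f i j else 0 := by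
  have hsplit : ∀ i j, f i j = (if i = j then f i j else 0) + (if i < j then f i j else 0)
      + (if j < i then f i j else 0) := by
    intro i j
    rcases lt_trichotomy i j with h | rfl | h
    · simp [h, h.ne, h.asymm]
    · simp
    · simp [h, h.ne', h.asymm]
  have hlower : ∑ i, ∑ j, (if j < i then f i j else 0) = ∑ i, ∑ j, if i < j then f i j else 0 := by
    rw [sum_comm]
    exact sum_congr rfl fun i _ => sum_congr rfl fun j _ => by rw [hf j i]
  rw [sum_congr rfl fun i _ => sum_congr rfl fun j _ => hsplit i j]
  simp only [sum_add_distrib, sum_ite_eq, mem_univ, if_true, hlower, two_nsmul, add_assoc]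

theorem Matrix.trace_mul_self_eq {ι R : Type*} [Fintype ι] [LinearOrder ι] [CommSemiring R]
    (A : Matrix ι ι R) :
    trace (A * A) = ∑ i, A i i ^ 2 + 2 * ∑ i, ∑ j, if i < j then A i j * A j i else 0 := by
  simp only [trace, diag, mul_apply]
  rw [Finset.sum_sum_eq_sum_diag_add_two_nsmul_of_symm _ fun i j => mul_comm _ _, nsmul_eq_mul,
    Nat.cast_ofNat]
  simp only [sq]

theorem Complex.I_mul_div_sub_mul_I_mul_div_sub (g a b : ℂ) :
    I * g / (a - b) * (I * g / (b - a)) = g ^ 2 / (a - b) ^ 2 := by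
  rw [show b - a = -(a - b) by ring, div_neg, mul_neg, ← sq, div_pow, mul_pow, I_sq]
  ring

theorem Matrix.diagonal_sq_add_smul_one_sq {ι R : Type*} [Fintype ι] [DecidableEq ι]
    [CommSemiring R] (q : ι → R) (c : R) :
    (diagonal q ^ 2 + c • (1 : Matrix ι ι R)) ^ 2 = diagonal fun i => (q i ^ 2 + c) ^ 2 := by
  rw [smul_one_eq_diagonal, diagonal_pow, diagonal_add, diagonal_pow]
  rfl

theorem calogero_painleveII_hamiltonian_general (n : ℕ) (t θ g : ℂ)
    (q p : Fin n → ℂ) :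
    Matrix.trace
        ((1 / 2 : ℂ) • (Matrix.of fun i j : Fin n =>
            if i = j then p i else Complex.I * g / (q i - q j)) ^ 2
          - (1 / 2 : ℂ) • ((Matrix.diagonal q) ^ 2
              + (t / 2) • (1 : Matrix (Fin n) (Fin n) ℂ)) ^ 2
          - θ • Matrix.diagonal q)
      = (∑ i, ((p i) ^ 2 / 2 - ((q i) ^ 2 + t / 2) ^ 2 / 2 - θ * q i))
        + g ^ 2 * ∑ i, ∑ j, if i < j then 1 / (q i - q j) ^ 2 else 0 := by
  have hoff : ∀ i j : Fin n, (if i < j then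
      (if i = j then p i else Complex.I * g / (q i - q j)) *
        (if j = i then p j else Complex.I * g / (q j - q i)) else 0)
      = g ^ 2 * if i < j then 1 / (q i - q j) ^ 2 else 0 := by
    intro i j
    by_cases hlt : i < j
    · rw [if_pos hlt, if_pos hlt, if_neg hlt.ne, if_neg hlt.ne',
        Complex.I_mul_div_sub_mul_I_mul_div_sub, mul_one_div]
    · rw [if_neg hlt, if_neg hlt, mul_zero]
  rw [trace_sub, trace_sub, trace_smul, trace_smul, trace_smul, sq, trace_mul_self_eq,
    diagonal_sq_add_smul_one_sq, trace_diagonal, trace_diagonal]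
  simp only [of_apply, ↓reduceIte, hoff, ← mul_sum, smul_eq_mul, sum_sub_distrib,
    ← sum_div]
  ring

/-- Computation of the multi-particle Calogero–Painlevé II Hamiltonian: for `Q = diag(q)`
and `P` with diagonal entries `p i` and off-diagonal entries `I·g/(q i − q j)`,
`Tr(P²/2 − (Q² + (t/2)·1)²/2 − θQ)` equals the multi-particle Hamiltonian with
pairwise inverse-square interaction. -/
theorem calogero_painleveII_hamiltonian (n : ℕ) (t θ g : ℂ)
    (q p : Fin n → ℂ) (hq : Function.Injective q) :
    Matrix.trace
        ((1 / 2 : ℂ) • (Matrix.of fun i j : Fin n =>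
            if i = j then p i else Complex.I * g / (q i - q j)) ^ 2
          - (1 / 2 : ℂ) • ((Matrix.diagonal q) ^ 2
              + (t / 2) • (1 : Matrix (Fin n) (Fin n) ℂ)) ^ 2
          - θ • Matrix.diagonal q)
      = (∑ i, ((p i) ^ 2 / 2 - ((q i) ^ 2 + t / 2) ^ 2 / 2 - θ * q i))
        + g ^ 2 * ∑ i, ∑ j, if i < j then 1 / (q i - q j) ^ 2 else 0 :=
  calogero_painleveII_hamiltonian_general n t θ g q p
end

section
/- Let k be a natural number, β a real number, and F : (Fin (k+1) → ℝ) → ℝ a function satisfying the homogeneity property: for all c > 0 and all a : Fin (k+1) → ℝ, F(fun j => c^((j+1)·β) · a j) = c · F(a) (real powers of the positive real c). Let v : ℝ → ℝ be infinitely differentiable and suppose there is a constant Cst such that for all z ∈ ℝ, F(fun j => iteratedDeriv j v z) = Cst + β·z·v(z). For t > 0 define u_t : ℝ → ℝ by u_t(x) = t^(−β)·v(x·t^(−β)). Then for every x ∈ ℝ and every t > 0, deriv (fun s => s^(−β)·v(x·s^(−β))) t + deriv (fun y => F(fun j => iteratedDeriv j u_t y)) x = 0; that is, the self-similar profile u(x,t)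 = t^(−β) v(x t^(−β)) solves the evolution PDE u_t + ∂_x F(u, u_x, …, ∂_x^k u) = 0 on the half-plane t > 0. -/
lemma iter_scaled (v : ℝ → ℝ) (hv : ContDiff ℝ (⊤ : ℕ∞) v) (τ : ℝ) (j : ℕ) (y : ℝ) :
    iteratedDeriv j (fun x' : ℝ => τ * v (x' * τ)) y
      = τ ^ (j + 1) * iteratedDeriv j v (y * τ) := by
  have hvj : ContDiff ℝ (j : ℕ∞) v := hv.of_le (by exact_mod_cast le_top)
  have hcomp : ContDiff ℝ (j : ℕ∞) (fun x : ℝ => v (τ * x)) :=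
    hvj.comp (contDiff_const.mul contDiff_id)
  have h1 : (fun x' : ℝ => τ * v (x' * τ)) = fun x' : ℝ => τ * (fun x : ℝ => v (τ * x)) x' := by
    funext x'; simp [mul_comm]
  rw [h1, ← iteratedDerivWithin_univ,
    iteratedDerivWithin_const_mul (Set.mem_univ y) uniqueDiffOn_univ τ hcomp.contDiffWithinAt,
    iteratedDerivWithin_univ, iteratedDeriv_comp_const_mul hvj τ]
  beta_reduce
  rw [mul_comm τ y]; ring

/-- Section 5 Theorem (one direction): for an evolution PDE in conservation-law form
`u_t + ∂ₓ F(u, uₓ, …, ∂ₓᵏu) = 0` admitting self-similar variables `u = v(z)/t^β`,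
`z = x/t^β` (so `F` is homogeneous: rescaling the `j`-th slot by `c^((j+1)β)` rescales
`F` by `c`), any smooth `v` solving the integrated self-similar ODE
`F(v, v', …, v⁽ᵏ⁾)(z) = Cst + β z v(z)` yields a solution
`u(x,t) = t^(−β) v(x t^(−β))` of the PDE for `t > 0`. -/
theorem self_similar_profile_solves_pde (k : ℕ) (β : ℝ)
    (F : (Fin (k + 1) → ℝ) → ℝ)
    (hF : ∀ c : ℝ, 0 < c → ∀ a : Fin (k + 1) → ℝ,
      F (fun j => c ^ ((((j : ℕ) : ℝ) + 1) * β) * a j) = c * F a)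
    (v : ℝ → ℝ) (hv : ContDiff ℝ (⊤ : ℕ∞) v) (Cst : ℝ)
    (hODE : ∀ z : ℝ, F (fun j => iteratedDeriv (j : ℕ) v z) = Cst + β * z * v z)
    (x t : ℝ) (ht : 0 < t) :
    deriv (fun s : ℝ => s ^ (-β) * v (x * s ^ (-β))) t
      + deriv (fun y : ℝ =>
          F (fun j => iteratedDeriv (j : ℕ)
            (fun x' : ℝ => t ^ (-β) * v (x' * t ^ (-β))) y)) x = 0 := by
  set τ : ℝ := t ^ (-β) with hτ
  have hdv : Differentiable ℝ v := hv.differentiable (by simp)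
  -- rewrite powers of τ as rpow of t⁻¹
  have hpow : ∀ j : ℕ, τ ^ (j + 1) = (t⁻¹) ^ ((((j : ℕ) : ℝ) + 1) * β) := by
    intro j
    rw [hτ, ← Real.rpow_natCast (t ^ (-β)) (j + 1), ← Real.rpow_mul ht.le,
      Real.inv_rpow ht.le, ← Real.rpow_neg ht.le]
    congr 1
    push_cast
    ring
  -- identify the flux term
  have hflux : (fun y : ℝ =>
      F (fun j => iteratedDeriv (j : ℕ) (fun x' : ℝ => t ^ (-β) * v (x' * t ^ (-β))) y))
      = fun y : ℝ => t⁻¹ * (Cst + β * (y * τ) * v (y * τ)) := by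
    funext y
    have h1 : (fun j : Fin (k + 1) =>
        iteratedDeriv (j : ℕ) (fun x' : ℝ => t ^ (-β) * v (x' * t ^ (-β))) y)
        = fun j : Fin (k + 1) =>
          (t⁻¹) ^ ((((j : ℕ) : ℝ) + 1) * β) * iteratedDeriv (j : ℕ) v (y * τ) := by
      funext j
      rw [← hτ, iter_scaled v hv τ (j : ℕ) y, hpow]
    rw [h1, hF t⁻¹ (inv_pos.mpr ht), hODE]
  rw [hflux]
  -- space derivative
  have hzx : HasDerivAt (fun y : ℝ => y * τ) τ x := hasDerivAt_mul_const τ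
  have hvx : HasDerivAt (fun y : ℝ => v (y * τ)) (deriv v (x * τ) * τ) x :=
    (hdv (x * τ)).hasDerivAt.comp x hzx
  have hsp : HasDerivAt (fun y : ℝ => t⁻¹ * (Cst + β * (y * τ) * v (y * τ)))
      (t⁻¹ * (0 + ((β * τ) * v (x * τ) + β * (x * τ) * (deriv v (x * τ) * τ)))) x :=
    (((hasDerivAt_const x Cst).add (((hzx.const_mul β).mul hvx))).const_mul t⁻¹)
  -- time derivative
  have hr : HasDerivAt (fun s : ℝ => s ^ (-β)) (-β * t ^ (-β - 1)) t :=
    Real.hasDerivAt_rpow_const (Or.inl ht.ne')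
  have hxr : HasDerivAt (fun s : ℝ => x * s ^ (-β)) (x * (-β * t ^ (-β - 1))) t :=
    hr.const_mul x
  have hvr : HasDerivAt (fun s : ℝ => v (x * s ^ (-β)))
      (deriv v (x * τ) * (x * (-β * t ^ (-β - 1)))) t :=
    (hdv (x * τ)).hasDerivAt.comp t hxr
  have htm : HasDerivAt (fun s : ℝ => s ^ (-β) * v (x * s ^ (-β)))
      ((-β * t ^ (-β - 1)) * v (x * τ) + τ * (deriv v (x * τ) * (x * (-β * t ^ (-β - 1))))) t :=
    hr.mul hvr
  rw [htm.deriv, hsp.deriv]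
  have hsplit : t ^ (-β - 1) = τ * t⁻¹ := by
    rw [hτ, show -β - 1 = -β + -1 by ring, Real.rpow_add ht, Real.rpow_neg_one]
  rw [hsplit]
  ring
end
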